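/- arXiv:1402.2094 — 2 statements merged into one kernel-verified Lean document; each statement's English description precedes it below -/
import Mathlib

section
/- For any u ∈ (0,1), the probability P_θ{ĥθ ≥ (n−1+u)T | D ≥ 1} that the equation F(y;θ'|D≥1) = u has no solution in θ' at y = ĥθ lies strictly between 0 and 1−u. -/
open Filter Set

/-- CDF of the gamma distribution with integer shape `d ≥ 1` and scale 1
(equal to 0 for x ≤ 0). -/
noncomputable def gammaCDF (x : ℝ) (d : ℕ) : ℝ :=
  (∫ u in (0:ℝ)..(max x 0), u ^ (d - 1) * Real.exp (-u)) / (Nat.factorial (d - 1))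

/-- P_θ(D ≥ d₀) where D ~ Binomial(n, 1 − e^{−T/θ}). -/
noncomputable def probDge (n d0 : ℕ) (T θ : ℝ) : ℝ :=
  ∑ j ∈ Finset.Icc d0 n,
    (n.choose j : ℝ) * (1 - Real.exp (-T / θ)) ^ j * Real.exp (-((n:ℝ) - j) * T / θ)

/-- The conditional CDF F(y;θ | D ≥ d₀) of the MLE of the exponential mean under
type-I censoring at time T with n items (Bartholomew's formula). -/
noncomputable def condCDF_MLE (n d0 : ℕ) (T y θ : ℝ) : ℝ :=
  (∑ d ∈ Finset.Icc d0 n, ∑ ν ∈ Finset.range (d + 1),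
      (-1:ℝ) ^ ν * (n.choose d) * (d.choose ν) * Real.exp (-(((n:ℝ) - d + ν)) * T / θ) *
        gammaCDF ((d * y - ((n:ℝ) - d + ν) * T) / θ) d) / probDge n d0 T θ

/-!
Write `a = T / θ` and `E = exp (-a)`. At `y = (n - 1 + u) T` every gamma argument
`(d y - (n - d + ν) T) / θ` is nonnegative except the one with `d = ν = 1`. Where it is
nonnegative, the Erlang CDF is `1 - exp (-x) ∑_{k<d} x^k / k!`; the exponentials combine to
`exp (-(d y - (n - d) T) / θ)`, independent of `ν`, and the polynomial parts cancel in the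
alternating sum over `ν` because the `d`-th finite difference of a polynomial of degree `< d`
vanishes. What is left is the binomial term `C(n,d) (1 - E)^d E^(n-d)` of `P(D ≥ 1) = 1 - E^n`,
except at `d = 1`, so that `1 - F = n E^(n-1) (exp (-u a) - E) / (1 - E^n)`.
This is positive since `E < exp (-u a)`, and below `1 - u` by strict convexity,
`exp (-u a) < u E + (1 - u)`, and `n E^(n-1) (1 - E) ≤ 1 - E^n`.
-/

open Finset Real

theorem sum_range_alternating_choose_mul_sub_pow {R : Type*} [CommRing R] (c : R) {d k : ℕ}
    (hkd : k < d) : ∑ j ∈ range (d + 1), (-1 : R) ^ j * d.choose j * (c - j) ^ k = 0 := by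
  have h := congr_fun (fwdDiff_iter_pow_eq_zero_of_lt (R := R) hkd) (-c)
  rw [fwdDiff_iter_eq_sum_shift] at h
  calc ∑ j ∈ range (d + 1), (-1 : R) ^ j * d.choose j * (c - j) ^ k
      = (-1) ^ (d + k) * ∑ j ∈ range (d + 1),
          ((-1 : ℤ) ^ (d - j) * d.choose j) • (-c + j • (1 : R)) ^ k := by
        rw [mul_sum]
        refine sum_congr rfl fun j hj => ?_
        obtain ⟨m, rfl⟩ := Nat.exists_eq_add_of_le (Nat.lt_succ_iff.mp (mem_range.mp hj))
        simp only [Nat.add_sub_cancel_left, zsmul_eq_mul, nsmul_eq_mul, mul_one]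
        push_cast
        rw [show c - j = (-1) * (-c + j) by ring, mul_pow]
        ring_nf
        rw [pow_mul', neg_one_sq, one_pow, mul_one]
    _ = 0 := by rw [h, Pi.zero_apply, mul_zero]

theorem hasDerivAt_exp_neg_mul_sum_pow_div_factorial (m : ℕ) (t : ℝ) :
    HasDerivAt (fun t => exp (-t) * ∑ k ∈ range (m + 1), t ^ k / k.factorial)
      (-(exp (-t) * (t ^ m / m.factorial))) t := by
  induction m with
  | zero => simpa using (hasDerivAt_neg t).exp
  | succ m ih =>
    have hsplit : (fun t => exp (-t) * ∑ k ∈ range (m + 2), t ^ k / k.factorial) =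
        fun t => exp (-t) * ∑ k ∈ range (m + 1), t ^ k / k.factorial
          + exp (-t) * (t ^ (m + 1) / (m + 1).factorial) := by
      funext s
      rw [sum_range_succ, mul_add]
    rw [hsplit]
    refine (ih.fun_add (((hasDerivAt_neg t).exp).fun_mul
      ((hasDerivAt_pow (m + 1) t).div_const _))).congr_deriv ?_
    rw [Nat.factorial_succ, Nat.cast_mul, Nat.add_sub_cancel]
    field_simp
    push_cast
    ring

theorem integral_pow_mul_exp_neg (m : ℕ) (x : ℝ) :
    ∫ t in (0 : ℝ)..x, t ^ m * exp (-t)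
      = m.factorial * (1 - exp (-x) * ∑ k ∈ range (m + 1), x ^ k / k.factorial) := by
  have hderiv (t : ℝ) : HasDerivAt
      (fun t => -(m.factorial * (exp (-t) * ∑ k ∈ range (m + 1), t ^ k / k.factorial)))
      (t ^ m * exp (-t)) t :=
    ((hasDerivAt_exp_neg_mul_sum_pow_div_factorial m t).const_mul _).neg.congr_deriv
      (by field_simp)
  have hsum_zero : ∑ k ∈ range (m + 1), (0 : ℝ) ^ k / k.factorial = 1 := by
    simp [sum_range_succ']
  rw [intervalIntegral.integral_eq_sub_of_hasDerivAt (fun t _ => hderiv t)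
    (by apply Continuous.intervalIntegrable; fun_prop), neg_zero, exp_zero, hsum_zero]
  ring

theorem gammaCDF_of_nonneg {x : ℝ} (hx : 0 ≤ x) {d : ℕ} (hd : 1 ≤ d) :
    gammaCDF x d = 1 - exp (-x) * ∑ k ∈ range d, x ^ k / k.factorial := by
  obtain ⟨m, rfl⟩ := Nat.exists_eq_add_of_le' hd
  rw [gammaCDF, max_eq_left hx, Nat.add_sub_cancel, integral_pow_mul_exp_neg,
    mul_div_cancel_left₀ _ (by positivity)]

theorem gammaCDF_of_nonpos {x : ℝ} (hx : x ≤ 0) (d : ℕ) : gammaCDF x d = 0 := by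
  rw [gammaCDF, max_eq_right hx, intervalIntegral.integral_same, zero_div]

theorem one_sub_pow_eq_sum_alternating {R : Type*} [CommRing R] (x : R) (d : ℕ) :
    (1 - x) ^ d = ∑ ν ∈ range (d + 1), (-1) ^ ν * d.choose ν * x ^ ν := by
  rw [sub_eq_neg_add, add_pow]
  refine sum_congr rfl fun ν _ => ?_
  rw [neg_pow, one_pow]
  ring

theorem sum_alternating_choose_mul_gammaCDF (a c : ℝ) {d : ℕ} (hd : 1 ≤ d)
    (hx : ∀ ν ≤ d, 0 ≤ (c - ν) * a) :
    ∑ ν ∈ range (d + 1), (-1) ^ ν * d.choose ν * exp (-a) ^ ν * gammaCDF ((c - ν) * a) d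
      = (1 - exp (-a)) ^ d := by
  have hterm : ∀ ν ∈ range (d + 1),
      (-1) ^ ν * d.choose ν * exp (-a) ^ ν * gammaCDF ((c - ν) * a) d
        = (-1) ^ ν * d.choose ν * exp (-a) ^ ν - exp (-(c * a)) * ∑ k ∈ range d,
            a ^ k / k.factorial * ((-1) ^ ν * d.choose ν * (c - ν) ^ k) := by
    intro ν hν
    have hexp : exp (-a) ^ ν * exp (-((c - ν) * a)) = exp (-(c * a)) := by
      rw [← exp_nat_mul, ← exp_add]
      ring_nf
    rw [gammaCDF_of_nonneg (hx ν (Nat.lt_succ_iff.mp (mem_range.mp hν))) hd, ← hexp, mul_sub,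
      mul_one]
    simp only [mul_sum]
    congr 1
    refine sum_congr rfl fun k _ => ?_
    rw [mul_pow]
    ring
  rw [sum_congr rfl hterm, sum_sub_distrib, ← one_sub_pow_eq_sum_alternating, ← mul_sum,
    sum_comm, sum_eq_zero fun k hk => by
      rw [← mul_sum, sum_range_alternating_choose_mul_sub_pow c (mem_range.mp hk), mul_zero],
    mul_zero, sub_zero]

theorem exp_neg_natCast_sub_mul_div {j n : ℕ} (hjn : j ≤ n) (T θ : ℝ) :
    exp (-((n : ℝ) - j) * T / θ) = exp (-T / θ) ^ (n - j) := by
  rw [← exp_nat_mul, Nat.cast_sub hjn]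
  ring_nf

theorem probDge_one (n : ℕ) (T θ : ℝ) : probDge n 1 T θ = 1 - exp (-T / θ) ^ n := by
  have hbinom := add_pow (1 - exp (-T / θ)) (exp (-T / θ)) n
  rw [sub_add_cancel, one_pow, range_eq_Ico, sum_eq_sum_Ico_succ_bot (by omega : 0 < n + 1),
    zero_add, Finset.Ico_add_one_right_eq_Icc] at hbinom
  have hsum : probDge n 1 T θ = ∑ j ∈ Icc 1 n,
      (1 - exp (-T / θ)) ^ j * exp (-T / θ) ^ (n - j) * n.choose j := by
    refine sum_congr rfl fun j hj => ?_
    rw [exp_neg_natCast_sub_mul_div (mem_Icc.mp hj).2]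
    ring
  simp only [pow_zero, Nat.sub_zero, Nat.choose_zero_right, Nat.cast_one, one_mul, mul_one]
    at hbinom
  linarith

theorem sum_condCDF_term_eq {n d : ℕ} (hdn : d ≤ n) (T θ s : ℝ) :
    ∑ ν ∈ range (d + 1), (-1 : ℝ) ^ ν * n.choose d * d.choose ν *
        exp (-((n : ℝ) - d + ν) * T / θ) *
          gammaCDF ((d * (s * T) - ((n : ℝ) - d + ν) * T) / θ) d
      = n.choose d * exp (-T / θ) ^ (n - d) * ∑ ν ∈ range (d + 1), (-1) ^ ν * d.choose ν *
          exp (-(T / θ)) ^ ν * gammaCDF ((d * s - (n - d) - ν) * (T / θ)) d := by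
  rw [mul_sum]
  refine sum_congr rfl fun ν _ => ?_
  have hexp : exp (-((n : ℝ) - d + ν) * T / θ)
      = exp (-T / θ) ^ (n - d) * exp (-(T / θ)) ^ ν := by
    rw [← exp_neg_natCast_sub_mul_div hdn, ← exp_nat_mul, ← exp_add]
    ring_nf
  rw [hexp]
  ring_nf

theorem condCDF_MLE_one_eq {n : ℕ} (hn : 1 ≤ n) {T θ u : ℝ} (hT : 0 ≤ T) (hθ : 0 ≤ θ)
    (hu₀ : 0 ≤ u) (hu₁ : u ≤ 1) :
    condCDF_MLE n 1 T ((n - 1 + u) * T) θ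
      = (probDge n 1 T θ - n * exp (-T / θ) ^ (n - 1) * (exp (u * (-T / θ)) - exp (-T / θ)))
          / probDge n 1 T θ := by
  have ha : 0 ≤ T / θ := div_nonneg hT hθ
  rw [condCDF_MLE]
  congr 1
  have hterm : ∀ d ∈ Finset.Icc 1 n,
      ∑ ν ∈ range (d + 1), (-1 : ℝ) ^ ν * n.choose d * d.choose ν *
        exp (-((n : ℝ) - d + ν) * T / θ) *
          gammaCDF ((d * ((n - 1 + u) * T) - ((n : ℝ) - d + ν) * T) / θ) d
      = n.choose d * (1 - exp (-T / θ)) ^ d * exp (-((n : ℝ) - d) * T / θ)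
        - if d = 1 then n * exp (-T / θ) ^ (n - 1) * (exp (u * (-T / θ)) - exp (-T / θ))
          else 0 := by
    intro d hd
    obtain ⟨hd₁, hdn⟩ := Finset.mem_Icc.mp hd
    rw [sum_condCDF_term_eq hdn, exp_neg_natCast_sub_mul_div hdn, neg_div θ T]
    rcases hd₁.eq_or_lt with rfl | hd₂
    · have h₀ : gammaCDF ((1 * (n - 1 + u) - (n - 1) - 0) * (T / θ)) 1
          = 1 - exp (u * -(T / θ)) := by
        rw [gammaCDF_of_nonneg (by nlinarith) le_rfl]
        simp only [sum_range_one, pow_zero, Nat.factorial_zero, Nat.cast_one, div_one, mul_one]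
        ring_nf
      have h₁ : gammaCDF ((1 * (n - 1 + u) - (n - 1) - 1) * (T / θ)) 1 = 0 :=
        gammaCDF_of_nonpos (by nlinarith) 1
      simp only [sum_range_succ, sum_range_zero, Nat.cast_zero, Nat.cast_one, h₀, h₁,
        Nat.choose_one_right, Nat.choose_zero_right, Nat.choose_self, pow_zero, pow_one, if_pos]
      ring
    · have hx : ∀ ν ≤ d, 0 ≤ (d * (n - 1 + u) - (n - d) - ν) * (T / θ) := by
        intro ν hν
        have : (ν : ℝ) ≤ d := by exact_mod_cast hν
        have : (d : ℝ) ≤ n := by exact_mod_cast hdn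
        have : (2 : ℝ) ≤ d := by exact_mod_cast hd₂
        exact mul_nonneg (by nlinarith) ha
      rw [sum_alternating_choose_mul_gammaCDF _ _ hd₁ hx, if_neg hd₂.ne']
      ring
  rw [sum_congr rfl hterm, sum_sub_distrib, sum_ite_eq',
    if_pos (Finset.mem_Icc.mpr ⟨le_rfl, hn⟩), probDge]

theorem exp_mul_lt_mul_exp_add_one_sub {u x : ℝ} (hu₀ : 0 < u) (hu₁ : u < 1) (hx : x ≠ 0) :
    exp (u * x) < u * exp x + (1 - u) := by
  simpa using strictConvexOn_exp.2 (mem_univ x) (mem_univ 0) hx hu₀ (sub_pos.mpr hu₁)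
    (add_sub_cancel u 1)

theorem natCast_mul_pow_pred_mul_one_sub_le {x : ℝ} (hx₀ : 0 ≤ x) (hx₁ : x ≤ 1)
    (n : ℕ) :
    n * x ^ (n - 1) * (1 - x) ≤ 1 - x ^ n := by
  calc n * x ^ (n - 1) * (1 - x) = (1 - x) * ∑ _k ∈ range n, x ^ (n - 1) := by
        rw [sum_const, card_range, nsmul_eq_mul]
        ring
    _ ≤ (1 - x) * ∑ k ∈ range n, x ^ k := by
        refine mul_le_mul_of_nonneg_left (sum_le_sum fun k hk => ?_) (sub_nonneg.mpr hx₁)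
        exact pow_le_pow_of_le_one hx₀ hx₁ (Nat.le_pred_of_lt (mem_range.mp hk))
    _ = 1 - x ^ n := by
        rw [mul_comm, geom_sum_mul_neg]

/-- Proposition 1: for u ∈ (0,1), the probability that θ(u,θ̂) is not defined,
namely P_θ{θ̂ ≥ (n−1+u)T | D ≥ 1} = 1 − F((n−1+u)T; θ | D ≥ 1), lies strictly
between 0 and 1 − u. -/
theorem prob_no_solution_bounds (n : ℕ) (hn : 1 ≤ n) (T : ℝ) (hT : 0 < T)
    (u : ℝ) (hu : u ∈ Set.Ioo (0:ℝ) 1) (θ : ℝ) (hθ : 0 < θ) :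
    0 < 1 - condCDF_MLE n 1 T (((n:ℝ) - 1 + u) * T) θ ∧
      1 - condCDF_MLE n 1 T (((n:ℝ) - 1 + u) * T) θ < 1 - u := by
  obtain ⟨hu₀, hu₁⟩ := hu
  set E := exp (-T / θ)
  have hx : -T / θ < 0 := div_neg_of_neg_of_pos (neg_neg_of_pos hT) hθ
  have hE₀ : 0 < E := exp_pos _
  have hE₁ : E < 1 := Real.exp_lt_one_iff.mpr hx
  have hEb : E < exp (u * (-T / θ)) := exp_lt_exp.mpr (by nlinarith)
  have hb : exp (u * (-T / θ)) < u * E + (1 - u) :=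
    exp_mul_lt_mul_exp_add_one_sub hu₀ hu₁ hx.ne
  have hP : 0 < probDge n 1 T θ := by
    rw [probDge_one, sub_pos]
    exact pow_lt_one₀ hE₀.le hE₁ (by omega)
  have hnE : 0 < n * E ^ (n - 1) := by positivity
  rw [condCDF_MLE_one_eq hn hT.le hθ.le hu₀.le hu₁.le, one_sub_div hP.ne', sub_sub_cancel]
  refine ⟨div_pos (mul_pos hnE (sub_pos.mpr hEb)) hP, (div_lt_iff₀ hP).mpr ?_⟩
  calc n * E ^ (n - 1) * (exp (u * (-T / θ)) - E) < n * E ^ (n - 1) * (1 - E) * (1 - u) := by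
        rw [mul_assoc _ (1 - E)]
        exact mul_lt_mul_of_pos_left (by linarith) hnE
    _ ≤ (1 - E ^ n) * (1 - u) :=
        mul_le_mul_of_nonneg_right (natCast_mul_pow_pred_mul_one_sub_le hE₀.le hE₁.le n)
          (sub_pos.mpr hu₁).le
    _ = (1 - u) * probDge n 1 T θ := by rw [probDge_one]; ring
end

section
/- In the hybrid type-I censoring setting with termination rank r > 1, for any u ∈ (0,1), lim_{θ→∞} F_r((n−1+u)T; θ | D ≥ 1) = u, where F_r is the conditional CDF of the MLE of the exponential mean. -/
open Filter

lemma gammaCDF_one (x : ℝ) : gammaCDF x 1 = 1 - Real.exp (-(max x 0)) := by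
  unfold gammaCDF
  simp only [Nat.sub_self, pow_zero, one_mul, Nat.factorial_zero, Nat.cast_one, div_one]
  rw [intervalIntegral.integral_comp_neg (fun u => Real.exp u), integral_exp]
  simp

lemma gammaCDF_nonneg (x : ℝ) (d : ℕ) : 0 ≤ gammaCDF x d := by
  unfold gammaCDF
  apply div_nonneg _ (by positivity)
  apply intervalIntegral.integral_nonneg (le_max_right x 0)
  intro u hu
  exact mul_nonneg (pow_nonneg hu.1 _) (Real.exp_nonneg _)

lemma gammaCDF_le (x : ℝ) (d : ℕ) (hd : 1 ≤ d) : gammaCDF x d ≤ (max x 0) ^ d := by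
  unfold gammaCDF
  have hm : (0:ℝ) ≤ max x 0 := le_max_right x 0
  have h1 : (∫ u in (0:ℝ)..(max x 0), u ^ (d - 1) * Real.exp (-u))
      ≤ ∫ _u in (0:ℝ)..(max x 0), (max x 0) ^ (d - 1) := by
    apply intervalIntegral.integral_mono_on hm
    · exact (Continuous.intervalIntegrable (by continuity) _ _)
    · exact intervalIntegrable_const
    · intro u hu
      calc u ^ (d-1) * Real.exp (-u) ≤ u ^ (d-1) * 1 := by
            apply mul_le_mul_of_nonneg_left _ (pow_nonneg hu.1 _)
            exact Real.exp_le_one_iff.mpr (by linarith [hu.1])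
        _ = u ^ (d-1) := mul_one _
        _ ≤ (max x 0) ^ (d-1) := pow_le_pow_left₀ hu.1 hu.2 _
  have h2 : (∫ _u in (0:ℝ)..(max x 0), (max x 0) ^ (d - 1)) = (max x 0) ^ d := by
    rw [intervalIntegral.integral_const, smul_eq_mul, sub_zero, ← pow_succ']
    congr 1; omega
  calc (∫ u in (0:ℝ)..(max x 0), u ^ (d - 1) * Real.exp (-u)) / (Nat.factorial (d - 1))
      ≤ (∫ u in (0:ℝ)..(max x 0), u ^ (d - 1) * Real.exp (-u)) := by
        apply div_le_self _ (by exact_mod_cast Nat.one_le_iff_ne_zero.mpr (Nat.factorial_ne_zero _))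
        apply intervalIntegral.integral_nonneg hm
        intro u hu
        exact mul_nonneg (pow_nonneg hu.1 _) (Real.exp_nonneg _)
    _ ≤ (max x 0) ^ d := h2 ▸ h1

lemma tendsto_mul_one_sub_exp (c : ℝ) (hc : c ≠ 0) :
    Tendsto (fun θ : ℝ => θ * (1 - Real.exp (-(c / θ)))) atTop (nhds c) := by
  have hslope : Tendsto (fun x : ℝ => (Real.exp x - 1) / x) (nhdsWithin 0 {(0:ℝ)}ᶜ) (nhds 1) := by
    have h := hasDerivAt_iff_tendsto_slope.mp (Real.hasDerivAt_exp 0)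
    simp only [Real.exp_zero] at h
    refine h.congr (fun x => ?_)
    simp [slope_def_field, Real.exp_zero]
  have harg : Tendsto (fun θ : ℝ => -(c / θ)) atTop (nhdsWithin 0 {(0:ℝ)}ᶜ) := by
    apply tendsto_nhdsWithin_of_tendsto_nhds_of_eventually_within
    · have : Tendsto (fun θ : ℝ => c / θ) atTop (nhds 0) := tendsto_const_nhds.div_atTop tendsto_id
      simpa using this.neg
    · filter_upwards [eventually_gt_atTop 0] with θ hθ
      simp only [Set.mem_compl_iff, Set.mem_singleton_iff, neg_eq_zero]
      exact div_ne_zero hc (ne_of_gt hθ)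
  have hcomp := hslope.comp harg
  have h2 : Tendsto (fun θ : ℝ => c * ((Real.exp (-(c/θ)) - 1) / (-(c/θ)))) atTop (nhds c) := by
    simpa using (tendsto_const_nhds (x := c)).mul hcomp
  refine h2.congr' ?_
  filter_upwards [eventually_gt_atTop 0] with θ hθ
  have hθ' : θ ≠ 0 := ne_of_gt hθ
  rw [show (Real.exp (-(c/θ)) - 1) / (-(c/θ)) = θ * (1 - Real.exp (-(c/θ))) / c from by
    rw [div_neg, ← neg_div, neg_sub, div_div_eq_mul_div]; ring]
  field_simp

lemma key (c : ℝ) (d : ℕ) (hd : 1 ≤ d) :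
    Tendsto (fun θ : ℝ => θ * gammaCDF (c / θ) d) atTop
      (nhds (if d = 1 then max c 0 else 0)) := by
  rcases eq_or_lt_of_le hd with h1 | h2
  · -- d = 1
    rw [if_pos h1.symm]
    subst h1
    rcases le_or_gt c 0 with hc | hc
    · rw [max_eq_right hc]
      have : (fun θ : ℝ => θ * gammaCDF (c/θ) 1) =ᶠ[atTop] fun _ => (0:ℝ) := by
        filter_upwards [eventually_gt_atTop 0] with θ hθ
        rw [gammaCDF_one, max_eq_right (div_nonpos_of_nonpos_of_nonneg hc hθ.le)]
        simp
      exact Tendsto.congr' this.symm tendsto_const_nhds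
    · rw [max_eq_left hc.le]
      refine (tendsto_mul_one_sub_exp c (ne_of_gt hc)).congr' ?_
      filter_upwards [eventually_gt_atTop 0] with θ hθ
      rw [gammaCDF_one, max_eq_left (le_of_lt (div_pos hc hθ))]
  · -- 2 ≤ d
    rw [if_neg (by omega)]
    apply tendsto_of_tendsto_of_tendsto_of_le_of_le'
      (g := fun _ : ℝ => (0:ℝ)) (h := fun θ : ℝ => |c| ^ d / θ)
    · exact tendsto_const_nhds
    · exact Tendsto.div_atTop tendsto_const_nhds tendsto_id
    · filter_upwards [eventually_gt_atTop 0] with θ hθ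
      exact mul_nonneg (le_of_lt hθ) (gammaCDF_nonneg _ _)
    · filter_upwards [eventually_ge_atTop 1] with θ hθ
      have hθ0 : (0:ℝ) < θ := lt_of_lt_of_le one_pos hθ
      have hb : max (c/θ) 0 ≤ |c| / θ := by
        apply max_le
        · exact div_le_div_of_nonneg_right (le_abs_self c) hθ0.le
        · positivity
      calc θ * gammaCDF (c/θ) d ≤ θ * ((max (c/θ) 0) ^ d) := by
            apply mul_le_mul_of_nonneg_left (gammaCDF_le _ _ hd) (le_of_lt hθ0)
        _ ≤ θ * ((|c|/θ) ^ d) := by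
            apply mul_le_mul_of_nonneg_left (pow_le_pow_left₀ (le_max_right _ _) hb _) (le_of_lt hθ0)
        _ = |c| ^ d * (θ / θ ^ d) := by rw [div_pow]; ring
        _ ≤ |c| ^ d * (1 / θ) := by
            apply mul_le_mul_of_nonneg_left _ (by positivity)
            rw [div_le_div_iff₀ (by positivity) hθ0]
            calc θ * θ = θ ^ 2 := (sq θ).symm
              _ ≤ θ ^ d := pow_le_pow_right₀ hθ (by omega)
              _ = 1 * θ ^ d := (one_mul _).symm
        _ = |c| ^ d / θ := by ring

lemma tendsto_exp_aux (a : ℝ) : Tendsto (fun θ : ℝ => Real.exp (-(a / θ))) atTop (nhds 1) := by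
  have h : Tendsto (fun θ : ℝ => -(a / θ)) atTop (nhds 0) := by
    simpa using (tendsto_const_nhds.div_atTop (tendsto_id (α := ℝ))).neg
  simpa [Function.comp_def] using (Real.continuous_exp.tendsto 0).comp h

lemma key_term (A b T c : ℝ) (d : ℕ) (hd : 1 ≤ d) :
    Tendsto (fun θ : ℝ => θ * (A * Real.exp (-(b * T / θ)) * gammaCDF (c / θ) d)) atTop
      (nhds (A * (if d = 1 then max c 0 else 0))) := by
  have h := ((tendsto_const_nhds (x := A)).mul (tendsto_exp_aux (b * T))).mul (key c d hd)
  have h2 := h.congr (fun θ => by ring : ∀ θ : ℝ,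
    A * Real.exp (-(b * T / θ)) * (θ * gammaCDF (c / θ) d)
      = θ * (A * Real.exp (-(b * T / θ)) * gammaCDF (c / θ) d))
  simpa using h2

lemma key_zero (K : ℝ → ℝ) (k c : ℝ) (hK : Tendsto K atTop (nhds k)) (d : ℕ) (hd : 2 ≤ d) :
    Tendsto (fun θ : ℝ => θ * (K θ * gammaCDF (c / θ) d)) atTop (nhds 0) := by
  have h := hK.mul (key c d (by omega))
  rw [if_neg (by omega), mul_zero] at h
  exact h.congr (fun θ => by ring)

/-- The conditional CDF F_r(y;θ | D ≥ 1) of the MLE of the exponential mean under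
hybrid type-I censoring (stopping at T* = min{X_{r:n}, T}), from Childs et al. (2003). -/
noncomputable def hybridCondCDF (n r : ℕ) (T y θ : ℝ) : ℝ :=
  ((∑ d ∈ Finset.Icc 1 (r - 1), ∑ ν ∈ Finset.range (d + 1),
      (-1:ℝ) ^ ν * (n.choose d) * (d.choose ν) * Real.exp (-(((n:ℝ) - d + ν)) * T / θ) *
        gammaCDF ((d * y - ((n:ℝ) - d + ν) * T) / θ) d) +
    (r:ℝ) * (n.choose r) * ∑ ν ∈ Finset.Icc 1 r,
      (-1:ℝ) ^ ν * Real.exp (-(((n:ℝ) - r + ν)) * T / θ) / ((n:ℝ) - r + ν) *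
        ((r - 1).choose (ν - 1)) * gammaCDF ((r * y - ((n:ℝ) - r + ν) * T) / θ) r +
    gammaCDF ((r:ℝ) * y / θ) r) / (1 - Real.exp (-(n:ℝ) * T / θ))

/-- For hybrid type-I censoring with 1 < r ≤ n and any u ∈ (0,1),
lim_{θ→∞} F_r((n−1+u)T; θ | D ≥ 1) = u. -/
theorem hybridCondCDF_limit (n r : ℕ) (hr : 1 < r) (hrn : r ≤ n)
    (T : ℝ) (hT : 0 < T) (u : ℝ) (hu : u ∈ Set.Ioo (0:ℝ) 1) :
    Tendsto (fun θ : ℝ => hybridCondCDF n r T (((n:ℝ) - 1 + u) * T) θ) atTop (nhds u) := by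
  obtain ⟨hu0, hu1⟩ := hu
  have hn2 : 2 ≤ n := le_trans hr hrn
  have hn0 : 0 < n := by omega
  have hnR : (0:ℝ) < n := by exact_mod_cast hn0
  set y : ℝ := ((n:ℝ) - 1 + u) * T with hy
  unfold hybridCondCDF
  simp only [neg_mul, neg_div]
  -- denominator
  have hD : Tendsto (fun θ : ℝ => θ * (1 - Real.exp (-((n:ℝ) * T / θ)))) atTop
      (nhds ((n:ℝ) * T)) := tendsto_mul_one_sub_exp _ (by positivity)
  -- S1
  have hS1 : Tendsto (fun θ : ℝ => θ * ∑ d ∈ Finset.Icc 1 (r-1), ∑ ν ∈ Finset.range (d+1),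
      (-1:ℝ) ^ ν * (n.choose d) * (d.choose ν) * Real.exp (-(((n:ℝ) - d + ν) * T / θ)) *
        gammaCDF (((d:ℝ) * y - ((n:ℝ) - d + ν) * T) / θ) d) atTop
      (nhds ((n:ℝ) * (u * T))) := by
    have hsum : Tendsto (fun θ : ℝ => ∑ d ∈ Finset.Icc 1 (r-1), ∑ ν ∈ Finset.range (d+1),
        θ * ((-1:ℝ) ^ ν * (n.choose d) * (d.choose ν) * Real.exp (-(((n:ℝ) - d + ν) * T / θ)) *
          gammaCDF (((d:ℝ) * y - ((n:ℝ) - d + ν) * T) / θ) d)) atTop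
        (nhds (∑ d ∈ Finset.Icc 1 (r-1), ∑ ν ∈ Finset.range (d+1),
          ((-1:ℝ) ^ ν * (n.choose d) * (d.choose ν)) *
            (if d = 1 then max ((d:ℝ) * y - ((n:ℝ) - d + ν) * T) 0 else 0))) := by
      apply tendsto_finset_sum
      intro d hd
      apply tendsto_finset_sum
      intro ν _
      exact key_term _ _ _ _ d (Finset.mem_Icc.mp hd).1
    have hval : (∑ d ∈ Finset.Icc 1 (r-1), ∑ ν ∈ Finset.range (d+1),
        ((-1:ℝ) ^ ν * (n.choose d) * (d.choose ν)) *
          (if d = 1 then max ((d:ℝ) * y - ((n:ℝ) - d + ν) * T) 0 else 0)) = (n:ℝ) * (u * T) := by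
      rw [Finset.sum_eq_single_of_mem 1 (Finset.mem_Icc.mpr ⟨le_refl 1, by omega⟩)]
      · rw [Finset.sum_range_succ, Finset.sum_range_succ, Finset.sum_range_zero,
          if_pos rfl, if_pos rfl]
        have e0 : ((1:ℕ):ℝ) * y - ((n:ℝ) - ((1:ℕ):ℝ) + ((0:ℕ):ℝ)) * T = u * T := by
          push_cast; rw [hy]; ring
        have e1 : ((1:ℕ):ℝ) * y - ((n:ℝ) - ((1:ℕ):ℝ) + ((1:ℕ):ℝ)) * T = (u - 1) * T := by
          push_cast; rw [hy]; ring
        rw [e0, e1, max_eq_left (by positivity), max_eq_right (by nlinarith)]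
        simp [Nat.choose_one_right]
      · intro d _ hd1
        apply Finset.sum_eq_zero
        intro ν _
        rw [if_neg hd1, mul_zero]
    rw [hval] at hsum
    refine hsum.congr (fun θ => ?_)
    simp only [Finset.mul_sum]
  -- S2
  have hS2 : Tendsto (fun θ : ℝ => θ * ((r:ℝ) * (n.choose r) * ∑ ν ∈ Finset.Icc 1 r,
      (-1:ℝ) ^ ν * Real.exp (-(((n:ℝ) - r + ν) * T / θ)) / ((n:ℝ) - r + ν) *
        ((r-1).choose (ν-1)) * gammaCDF (((r:ℝ) * y - ((n:ℝ) - r + ν) * T) / θ) r)) atTop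
      (nhds 0) := by
    have hsum : Tendsto (fun θ : ℝ => ∑ ν ∈ Finset.Icc 1 r,
        θ * (((-1:ℝ) ^ ν * Real.exp (-(((n:ℝ) - r + ν) * T / θ)) / ((n:ℝ) - r + ν) *
          ((r-1).choose (ν-1))) * gammaCDF (((r:ℝ) * y - ((n:ℝ) - r + ν) * T) / θ) r)) atTop
        (nhds 0) := by
      rw [show (0:ℝ) = ∑ _ν ∈ Finset.Icc 1 r, (0:ℝ) by simp]
      apply tendsto_finset_sum
      intro ν _
      refine key_zero _ ((-1:ℝ)^ν * 1 / ((n:ℝ) - r + ν) * ((r-1).choose (ν-1))) _ ?_ r hr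
      exact (((tendsto_const_nhds).mul (tendsto_exp_aux _)).div_const _).mul_const _
    have h2 := (tendsto_const_nhds (x := (r:ℝ) * (n.choose r))).mul hsum
    rw [mul_zero] at h2
    refine h2.congr (fun θ => ?_)
    simp only [Finset.mul_sum]
    apply Finset.sum_congr rfl
    intro ν _
    ring
  -- S3
  have hS3 : Tendsto (fun θ : ℝ => θ * gammaCDF ((r:ℝ) * y / θ) r) atTop (nhds 0) := by
    have h := key ((r:ℝ) * y) r (by omega)
    rwa [if_neg (by omega)] at h
  -- combine
  have hN := (hS1.add hS2).add hS3
  rw [add_zero, add_zero] at hN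
  have heq : ∀ θ : ℝ, ((θ * ∑ d ∈ Finset.Icc 1 (r-1), ∑ ν ∈ Finset.range (d+1),
        (-1:ℝ) ^ ν * (n.choose d) * (d.choose ν) * Real.exp (-(((n:ℝ) - d + ν) * T / θ)) *
          gammaCDF (((d:ℝ) * y - ((n:ℝ) - d + ν) * T) / θ) d) +
      θ * ((r:ℝ) * (n.choose r) * ∑ ν ∈ Finset.Icc 1 r,
        (-1:ℝ) ^ ν * Real.exp (-(((n:ℝ) - r + ν) * T / θ)) / ((n:ℝ) - r + ν) *
          ((r-1).choose (ν-1)) * gammaCDF (((r:ℝ) * y - ((n:ℝ) - r + ν) * T) / θ) r) +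
      θ * gammaCDF ((r:ℝ) * y / θ) r) = θ *
      ((∑ d ∈ Finset.Icc 1 (r-1), ∑ ν ∈ Finset.range (d+1),
        (-1:ℝ) ^ ν * (n.choose d) * (d.choose ν) * Real.exp (-(((n:ℝ) - d + ν) * T / θ)) *
          gammaCDF (((d:ℝ) * y - ((n:ℝ) - d + ν) * T) / θ) d) +
      (r:ℝ) * (n.choose r) * (∑ ν ∈ Finset.Icc 1 r,
        (-1:ℝ) ^ ν * Real.exp (-(((n:ℝ) - r + ν) * T / θ)) / ((n:ℝ) - r + ν) *
          ((r-1).choose (ν-1)) * gammaCDF (((r:ℝ) * y - ((n:ℝ) - r + ν) * T) / θ) r) +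
      gammaCDF ((r:ℝ) * y / θ) r) := fun θ => by ring
  have hN' := hN.congr heq
  have hne : (n:ℝ) * T ≠ 0 := by positivity
  have hmain := hN'.div hD hne
  rw [show (n:ℝ) * (u * T) / ((n:ℝ) * T) = u by field_simp] at hmain
  refine hmain.congr' ?_
  filter_upwards [eventually_gt_atTop 0] with θ hθ
  simp only [Pi.div_apply]
  rw [mul_div_mul_left _ _ (ne_of_gt hθ)]
end
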